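/- Suppose A, B > 0, M ∈ ℕ, and t_1, …, t_M ∈ [0,1] satisfy the two-sided discretization bounds A·‖x‖_{L_1[0,1]} ≤ (1/M)·∑_{j=1}^M |x(t_j)| ≤ B·‖x‖_{L_1[0,1]} for all x ∈ X^N. Then M ≥ nN/((1+ε)B). In particular, the L_1 norm on X^N cannot be discretized with uniform constants using a number of sampling points proportional to the dimension N. -/

import Mathlib

/-!
The first `n` functions are `N` times the indicators of the blocks `[k/N, (k+1)/N)`, `k < n`,
each of norm one, so the lower discretization bound puts a sample point into every block, hence
into some sub-interval `I_{k+1}(i_k)`. As `j ↦ (i_{k,j})_k` is onto, some `x_j` with `n < j ≤ N`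
is `≥ N` at these `n` distinct sample points, while `‖x_j‖₁ = 1 + n/m = 1 + ε`. The upper bound
then gives `n N ≤ M B (1 + ε)`.
-/

open MeasureTheory Set Finset

/-- The interval `I_k(i)` of width `1/(m*N)`, the `i`-th subinterval (1-based)
of `[(k-1)/N, k/N)`. -/
noncomputable def Ik (m N k i : ℕ) : Set ℝ :=
  Set.Ico (((k : ℝ) - 1) / N + ((i : ℝ) - 1) / (m * N))
    (((k : ℝ) - 1) / N + (i : ℝ) / (m * N))

/-- The functions `x_j` of the construction: for `1 ≤ j ≤ n`,
`x_j = N·𝟙_{[(j-1)/N, j/N)}`, and for `n < j ≤ N`,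
`x_j = N·∑_{k=1}^n 𝟙_{I_k(i_{k,j})} + N·𝟙_{[(j-1)/N, j/N)}`, where the indices
`i_{k,j}` are encoded (0-based) by the map `idx`. -/
noncomputable def xfun (n m N : ℕ) (idx : ℕ → Fin n → Fin m) (j : ℕ) : ℝ → ℝ :=
  fun t =>
    if j ≤ n then
      (N : ℝ) * Set.indicator (Set.Ico (((j : ℝ) - 1) / N) ((j : ℝ) / N)) (fun _ => (1 : ℝ)) t
    else
      (N : ℝ) * ∑ k : Fin n,
          Set.indicator (Ik m N ((k : ℕ) + 1) ((idx j k : ℕ) + 1)) (fun _ => (1 : ℝ)) t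
        + (N : ℝ) * Set.indicator (Set.Ico (((j : ℝ) - 1) / N) ((j : ℝ) / N)) (fun _ => (1 : ℝ)) t

lemma setIntegral_Ico_indicator_one {a b : ℝ} (ha : 0 ≤ a) (hab : a ≤ b) (hb : b ≤ 1) :
    ∫ s in Ico (0 : ℝ) 1, (Ico a b).indicator (fun _ => (1 : ℝ)) s = b - a := by
  rw [← Pi.one_def, integral_indicator_one measurableSet_Ico,
    measureReal_restrict_apply measurableSet_Ico, inter_eq_self_of_subset_left (Ico_subset_Ico ha hb), Real.volume_real_Ico_of_le hab]

lemma exists_mem_Ico_add_div {c d t : ℝ} {m : ℕ} (hd : 0 < d) (ht : t ∈ Ico c (c + m / d)) :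
    ∃ i : Fin m, t ∈ Ico (c + i / d) (c + (i + 1) / d) := by
  have h0 : 0 ≤ (t - c) * d := mul_nonneg (by linarith [ht.1]) hd.le
  have hlt : (t - c) * d < m := by rw [← lt_div_iff₀ hd]; linarith [ht.2]
  refine ⟨⟨⌊(t - c) * d⌋₊, (Nat.floor_lt h0).2 hlt⟩, ?_, ?_⟩
  · have : (⌊(t - c) * d⌋₊ : ℝ) / d ≤ t - c := (div_le_iff₀ hd).2 (Nat.floor_le h0)
    dsimp only
    linarith
  · have : t - c < (⌊(t - c) * d⌋₊ + 1 : ℝ) / d := (lt_div_iff₀ hd).2 (Nat.lt_floor_add_one _)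
    dsimp only
    linarith

lemma floor_mul_eq_of_mem_Ico {N : ℕ} (hN : 0 < N) {k : ℕ} {s : ℝ}
    (hs : s ∈ Ico ((k : ℝ) / N) ((k + 1) / N)) : ⌊s * N⌋₊ = k := by
  have hNr : (0 : ℝ) < N := by exact_mod_cast hN
  rw [Nat.floor_eq_iff (by nlinarith [hs.1, show (0 : ℝ) ≤ k / N by positivity]),
    ← div_le_iff₀ hNr, ← lt_div_iff₀ hNr]
  exact hs

lemma card_mul_le_sum_of_injective {ι κ : Type*} [Fintype ι] [Fintype κ] {f : ι → ℝ}
    (hf : ∀ i, 0 ≤ f i) {σ : κ → ι} (hσ : σ.Injective) {c : ℝ} (hc : ∀ k, c ≤ f (σ k)) :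
    Fintype.card κ * c ≤ ∑ i, f i :=
  calc Fintype.card κ * c = ∑ _k : κ, c := by simp
    _ ≤ ∑ k, f (σ k) := sum_le_sum fun k _ => hc k
    _ = ∑ i ∈ univ.map ⟨σ, hσ⟩, f i := (sum_map univ ⟨σ, hσ⟩ f).symm
    _ ≤ ∑ i, f i := sum_le_univ_sum_of_nonneg hf

lemma Ik_succ_succ (m N k i : ℕ) :
    Ik m N (k + 1) (i + 1) =
      Ico ((k : ℝ) / N + i / (m * N)) ((k : ℝ) / N + (i + 1) / (m * N)) := by
  simp only [Ik]; push_cast; ring_nf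

lemma setIntegral_indicator_Ik {m N k i : ℕ} (hk : k < N) (hi : i < m) :
    ∫ s in Ico (0 : ℝ) 1, (Ik m N (k + 1) (i + 1)).indicator (fun _ => (1 : ℝ)) s
      = 1 / (m * N) := by
  have hN : (0 : ℝ) < N := by exact_mod_cast k.zero_le.trans_lt hk
  have hmN : (0 : ℝ) < m * N := mul_pos (by exact_mod_cast i.zero_le.trans_lt hi) hN
  have hle : (k * m + (i + 1) : ℝ) ≤ m * N := by
    have : k * m + (i + 1) ≤ m * N := by nlinarith
    exact_mod_cast this
  rw [Ik_succ_succ, setIntegral_Ico_indicator_one (by positivity) (by gcongr; linarith)]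
  · ring
  · rw [div_add_div _ _ hN.ne' hmN.ne', div_le_one (by positivity)]
    nlinarith

lemma exists_mem_Ik_of_mem_Ico {m N : ℕ} (hm : m ≠ 0) (hN : 0 < N) {k : ℕ} {s : ℝ}
    (hs : s ∈ Ico ((k : ℝ) / N) ((k + 1) / N)) : ∃ i : Fin m, s ∈ Ik m N (k + 1) (i + 1) := by
  have hNr : (0 : ℝ) < N := by exact_mod_cast hN
  have hmr : (0 : ℝ) < m := by exact_mod_cast Nat.pos_of_ne_zero hm
  simp only [Ik_succ_succ]
  refine exists_mem_Ico_add_div (by positivity) ?_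
  convert hs using 2
  field_simp

section xfun

variable {n m N : ℕ} {idx : ℕ → Fin n → Fin m}

lemma xfun_nonneg (j : ℕ) (s : ℝ) : 0 ≤ xfun n m N idx j s := by
  have hind : ∀ u : Set ℝ, 0 ≤ u.indicator (fun _ => (1 : ℝ)) s :=
    fun u => indicator_nonneg (fun _ _ => zero_le_one) s
  unfold xfun
  split_ifs
  · exact mul_nonneg N.cast_nonneg (hind _)
  · exact add_nonneg (mul_nonneg N.cast_nonneg (sum_nonneg fun k _ => hind _))
      (mul_nonneg N.cast_nonneg (hind _))

lemma abs_xfun (j : ℕ) (s : ℝ) : |xfun n m N idx j s| = xfun n m N idx j s :=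
  abs_of_nonneg (xfun_nonneg j s)

lemma xfun_succ_of_lt {k : ℕ} (hk : k < n) :
    xfun n m N idx (k + 1) =
      fun s => (N : ℝ) * (Ico ((k : ℝ) / N) ((k + 1) / N)).indicator (fun _ => 1) s := by
  funext s
  simp only [xfun, if_pos (Nat.succ_le_of_lt hk), Nat.cast_add, Nat.cast_one, add_sub_cancel_right]

lemma mem_Ico_of_xfun_succ_ne_zero {k : ℕ} (hk : k < n) {s : ℝ}
    (hs : xfun n m N idx (k + 1) s ≠ 0) : s ∈ Ico ((k : ℝ) / N) ((k + 1) / N) := by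
  rw [xfun_succ_of_lt hk] at hs
  exact mem_of_indicator_ne_zero (right_ne_zero_of_mul hs)

lemma integral_xfun_succ_of_lt {k : ℕ} (hk : k < n) (hnN : n ≤ N) :
    ∫ s in Ico (0 : ℝ) 1, xfun n m N idx (k + 1) s = 1 := by
  have hN : (0 : ℝ) < N := by exact_mod_cast hk.trans_le hnN |>.trans_le' k.zero_le
  have hkN : (k + 1 : ℝ) ≤ N := by exact_mod_cast hk.trans_le hnN
  rw [xfun_succ_of_lt hk, integral_const_mul, setIntegral_Ico_indicator_one (by positivity)
    (by gcongr; linarith) ((div_le_one hN).2 hkN)]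
  field_simp
  ring

lemma xfun_of_lt {j : ℕ} (hj : n < j) (s : ℝ) :
    xfun n m N idx j s =
      (N : ℝ) * ∑ k : Fin n, (Ik m N ((k : ℕ) + 1) ((idx j k : ℕ) + 1)).indicator (fun _ => 1) s
        + (N : ℝ) * (Ico (((j : ℝ) - 1) / N) (j / N)).indicator (fun _ => 1) s :=
  if_neg hj.not_ge

lemma le_xfun_of_mem_Ik {j : ℕ} (hj : n < j) (k : Fin n) {s : ℝ}
    (hs : s ∈ Ik m N ((k : ℕ) + 1) ((idx j k : ℕ) + 1)) : (N : ℝ) ≤ xfun n m N idx j s := by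
  have hind : ∀ u : Set ℝ, 0 ≤ u.indicator (fun _ => (1 : ℝ)) s :=
    fun u => indicator_nonneg (fun _ _ => zero_le_one) s
  rw [xfun_of_lt hj]
  calc (N : ℝ) = N * 1 + N * 0 := by ring
    _ ≤ _ := by
      gcongr
      · calc (1 : ℝ) = (Ik m N ((k : ℕ) + 1) ((idx j k : ℕ) + 1)).indicator (fun _ => 1) s :=
            (indicator_of_mem hs (fun _ => 1)).symm
          _ ≤ _ := by apply single_le_sum (fun k' _ => hind _) (Finset.mem_univ k)
      · exact hind _

lemma integral_xfun_of_mem_Ioc (hm : m ≠ 0) {j : ℕ} (hj : j ∈ Set.Ioc n N) :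
    ∫ s in Ico (0 : ℝ) 1, xfun n m N idx j s = n / m + 1 := by
  have hN : (0 : ℝ) < N := by exact_mod_cast (n.zero_le.trans_lt hj.1).trans_le hj.2
  have hj1 : (1 : ℝ) ≤ j := by exact_mod_cast hj.1.trans_le' n.zero_le
  have hjN : (j : ℝ) ≤ N := by exact_mod_cast hj.2
  have hind : ∀ u : Set ℝ, MeasurableSet u →
      Integrable (u.indicator fun _ => (1 : ℝ)) (volume.restrict (Ico 0 1)) :=
    fun u hu => (integrable_const 1).indicator hu
  rw [funext (xfun_of_lt hj.1), integral_add, integral_const_mul, integral_const_mul,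
    integral_finsetSum _ fun k _ => hind (Ik m N _ _) measurableSet_Ico,
    sum_congr rfl fun k _ => setIntegral_indicator_Ik (k.isLt.trans_le hj.1.le |>.trans_le hj.2)
      (idx j k).isLt,
    sum_const, card_univ, Fintype.card_fin, nsmul_eq_mul,
    setIntegral_Ico_indicator_one (div_nonneg (by linarith) hN.le) (by gcongr; linarith)
      ((div_le_one hN).2 hjN)]
  · field_simp
    ring
  · exact (integrable_finsetSum _ fun k _ => hind (Ik m N _ _) measurableSet_Ico).const_mul _
  · exact (hind _ measurableSet_Ico).const_mul _

lemma exists_injective_mem_Ico_of_le_sum {M : ℕ} {t : Fin M → ℝ} {A : ℝ} (hA : 0 < A)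
    (hnN : n ≤ N)
    (hlow : ∀ k < n, A * ∫ s in Ico (0 : ℝ) 1, |xfun n m N idx (k + 1) s| ≤
      (1 / M : ℝ) * ∑ j, |xfun n m N idx (k + 1) (t j)|) :
    ∃ σ : Fin n → Fin M, σ.Injective ∧ ∀ k : Fin n, t (σ k) ∈ Ico ((k : ℝ) / N) ((k + 1) / N) := by
  have hsample : ∀ k : Fin n, ∃ j, t j ∈ Ico ((k : ℝ) / N) ((k + 1) / N) := by
    intro k
    have h := hlow k k.isLt
    simp only [abs_xfun, integral_xfun_succ_of_lt k.isLt hnN, mul_one] at h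
    have hsum : ∑ j, xfun n m N idx (k + 1) (t j) ≠ 0 := by
      intro h0
      rw [h0, mul_zero] at h
      linarith
    obtain ⟨j, -, hj⟩ := exists_ne_zero_of_sum_ne_zero hsum
    exact ⟨j, mem_Ico_of_xfun_succ_ne_zero k.isLt hj⟩
  choose σ hσ using hsample
  refine ⟨σ, fun k k' h => Fin.ext ?_, hσ⟩
  have hN : 0 < N := k.pos.trans_le hnN
  rw [← floor_mul_eq_of_mem_Ico hN (hσ k), ← floor_mul_eq_of_mem_Ico hN (hσ k'), h]

lemma exists_le_xfun_of_mem_Ico (hm : m ≠ 0) (hN : 0 < N) (hidx : SurjOn idx (Set.Ioc n N) univ)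
    {s : Fin n → ℝ} (hs : ∀ k : Fin n, s k ∈ Ico ((k : ℝ) / N) ((k + 1) / N)) :
    ∃ j ∈ Set.Ioc n N, ∀ k : Fin n, (N : ℝ) ≤ xfun n m N idx j (s k) := by
  choose ι hι using fun k => exists_mem_Ik_of_mem_Ico hm hN (hs k)
  obtain ⟨j, hj, rfl⟩ := hidx (mem_univ ι)
  exact ⟨j, hj, fun k => le_xfun_of_mem_Ik hj.1 k (hι k)⟩

end xfun

theorem stmt5_general (n m N : ℕ) (ε : ℝ) (hn : 0 < n) (hε : 0 < ε)
    (hm : (m : ℝ) = n / ε) (hN : N = n + m ^ n)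
    (idx : ℕ → Fin n → Fin m) (hidx : Set.BijOn idx (Set.Ioc n N) Set.univ)
    (A B : ℝ) (hA : 0 < A) (hB : 0 < B) (M : ℕ) (t : Fin M → ℝ)
    (hdisc : ∀ x ∈ Submodule.span ℝ (xfun n m N idx '' Set.Icc 1 N),
      A * ∫ s in Set.Ico (0 : ℝ) 1, |x s| ≤ (1 / M : ℝ) * ∑ j, |x (t j)| ∧
        (1 / M : ℝ) * ∑ j, |x (t j)| ≤ B * ∫ s in Set.Ico (0 : ℝ) 1, |x s|) :
    (n * N : ℝ) / ((1 + ε) * B) ≤ M := by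
  have hnr : (0 : ℝ) < n := by exact_mod_cast hn
  have hm0 : m ≠ 0 := by
    rintro rfl
    exact (div_pos hnr hε).ne' (by simpa using hm.symm)
  have hnN : n ≤ N := hN ▸ Nat.le_add_right n _
  have hmem : ∀ j ∈ Set.Icc 1 N,
      xfun n m N idx j ∈ Submodule.span ℝ (xfun n m N idx '' Set.Icc 1 N) :=
    fun j hj => Submodule.subset_span (mem_image_of_mem _ hj)
  obtain ⟨σ, hσinj, hσ⟩ := exists_injective_mem_Ico_of_le_sum hA hnN fun k hk =>
    (hdisc _ (hmem (k + 1) ⟨by omega, by omega⟩)).1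
  obtain ⟨j, hj, hjσ⟩ := exists_le_xfun_of_mem_Ico hm0 (hn.trans_le hnN) hidx.surjOn hσ
  have hlow := card_mul_le_sum_of_injective (xfun_nonneg j <| t ·) hσinj hjσ
  have hup := (hdisc _ (hmem j ⟨Nat.one_le_of_lt hj.1, hj.2⟩)).2
  have hM : (0 : ℝ) < M := by exact_mod_cast (σ ⟨0, hn⟩).pos
  rw [Fintype.card_fin] at hlow
  simp only [abs_xfun, integral_xfun_of_mem_Ioc hm0 hj, one_div, inv_mul_le_iff₀ hM] at hup
  rw [hm, div_div_cancel₀ hnr.ne'] at hup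
  rw [div_le_iff₀ (by positivity)]
  linarith

theorem stmt5 (n m N : ℕ) (ε : ℝ) (hn : 0 < n) (hε : 0 < ε) (hε1 : ε < 1)
    (hm : (m : ℝ) = n / ε) (hN : N = n + m ^ n)
    (idx : ℕ → Fin n → Fin m) (hidx : Set.BijOn idx (Set.Ioc n N) Set.univ)
    (A B : ℝ) (hA : 0 < A) (hB : 0 < B) (M : ℕ) (t : Fin M → ℝ)
    (ht : ∀ j, t j ∈ Set.Icc (0 : ℝ) 1)
    (hdisc : ∀ x ∈ Submodule.span ℝ (xfun n m N idx '' Set.Icc 1 N),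
      A * ∫ s in Set.Ico (0 : ℝ) 1, |x s| ≤ (1 / M : ℝ) * ∑ j, |x (t j)| ∧
        (1 / M : ℝ) * ∑ j, |x (t j)| ≤ B * ∫ s in Set.Ico (0 : ℝ) 1, |x s|) :
    (n * N : ℝ) / ((1 + ε) * B) ≤ M :=
  stmt5_general n m N ε hn hε hm hN idx hidx A B hA hB M t hdisc
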